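/- In 𝒰, for all i ≠ j in I and all r ∈ ℕ one has [h_{i,3}, b_{j,r}] = 2(α_i,α_j)·b_{j,r+3}. -/

import Mathlib

noncomputable section

/-- Data of a symmetrizable generalized Cartan matrix `(c_{ij})` (of finite type size bounds)
together with a positive symmetrizer `(d_i)`. -/
structure CartanData (I : Type) [Fintype I] : Type where
  c : I → I → ℤ
  d : I → ℝ
  c_diag : ∀ i, c i i = 2
  c_nonpos : ∀ i j, i ≠ j → c i j ≤ 0
  c_zero_iff : ∀ i j, c i j = 0 ↔ c j i = 0
  c_bound : ∀ i j, i ≠ j → c i j * c j i ≤ 3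
  d_pos : ∀ i, 0 < d i
  d_symm : ∀ i j, d i * (c i j : ℝ) = d j * (c j i : ℝ)

/-- The pairing `(α_i, α_j) = d_i · c_{ij}`. -/
def CartanData.al {I : Type} [Fintype I] (A : CartanData I) (i j : I) : ℝ :=
  A.d i * (A.c i j : ℝ)

/-- Generators for Drinfeld-type presentations: `h i r` stands for `h_{i,2r+1}` and
`b i r` stands for `b_{i,r}`. -/
inductive TYGen (I : Type) : Type
  | h : I → ℕ → TYGen I
  | b : I → ℕ → TYGen I

section Algebras

variable {I : Type} [Fintype I] [DecidableEq I]

/-- The element `h_{i,r}` of the free algebra, for `r : ℤ`, with the conventions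
`h_{i,-1} = 1` and `h_{i,r} = 0` for `r` even or `r < -1`. -/
def TYh (i : I) (r : ℤ) : FreeAlgebra ℂ (TYGen I) :=
  if r = -1 then 1
  else if 0 ≤ r ∧ r % 2 = 1 then FreeAlgebra.ι ℂ (TYGen.h i ((r - 1) / 2).toNat)
  else 0

/-- The generator `b_{i,r}` of the free algebra. -/
def TYb (i : I) (r : ℕ) : FreeAlgebra ℂ (TYGen I) := FreeAlgebra.ι ℂ (TYGen.b i r)

/-- The generator `h_{i,2r+1}` of the free algebra. -/
def TYhodd (i : I) (r : ℕ) : FreeAlgebra ℂ (TYGen I) := FreeAlgebra.ι ℂ (TYGen.h i r)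

/-- The element `h_{i,n}` of the free algebra, `n : ℕ`, with the convention `h_{i,2r} = 0`. -/
def TYhnat (i : I) (n : ℕ) : FreeAlgebra ℂ (TYGen I) :=
  if n % 2 = 1 then FreeAlgebra.ι ℂ (TYGen.h i ((n - 1) / 2)) else 0

/-- Defining relations of the twisted Yangian `ᵢY` in Drinfeld presentation. -/
inductive TYRel (A : CartanData I) : FreeAlgebra ℂ (TYGen I) → FreeAlgebra ℂ (TYGen I) → Prop
  | ty0 (i j : I) (r s : ℤ) : TYRel A ⁅TYh i r, TYh j s⁆ 0
  | ty1 (i j : I) (r s : ℕ) :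
      TYRel A (⁅TYh i ((r : ℤ) + 1), TYb j s⁆ - ⁅TYh i ((r : ℤ) - 1), TYb j (s + 2)⁆)
        ((A.al i j : ℂ) •
            (TYh i ((r : ℤ) - 1) * TYb j (s + 1) + TYb j (s + 1) * TYh i ((r : ℤ) - 1))
          + (((A.al i j : ℂ) ^ 2 / 4) • ⁅TYh i ((r : ℤ) - 1), TYb j s⁆))
  | ty2 (i j : I) (r s : ℕ) :
      TYRel A (⁅TYb i (r + 1), TYb j s⁆ - ⁅TYb i r, TYb j (s + 1)⁆)
        (((A.al i j : ℂ) / 2) • (TYb i r * TYb j s + TYb j s * TYb i r)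
          - (if i = j then (2 : ℂ) * (-1 : ℂ) ^ s else 0) • TYh i ((r : ℤ) + (s : ℤ) + 1))
  | serre0 (i j : I) (hc : A.c i j = 0) : TYRel A ⁅TYb i 0, TYb j 0⁆ 0
  | serre1 (i j : I) (hc : A.c i j = -1) :
      TYRel A ⁅TYb i 0, ⁅TYb i 0, TYb j 0⁆⁆ ((-(A.d i : ℂ)) • TYb j 0)
  | serre2 (i j : I) (hc : A.c i j = -2) :
      TYRel A ⁅TYb i 0, ⁅TYb i 0, ⁅TYb i 0, TYb j 0⁆⁆⁆
        (((-4 : ℂ) * (A.d i : ℂ)) • ⁅TYb i 0, TYb j 0⁆)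
  | serre3 (i j : I) (hc : A.c i j = -3) :
      TYRel A ⁅TYb i 0, ⁅TYb i 0, ⁅TYb i 0, ⁅TYb i 0, TYb j 0⁆⁆⁆⁆
        (((-10 : ℂ) * (A.d i : ℂ)) • ⁅TYb i 0, ⁅TYb i 0, TYb j 0⁆⁆
          + ((-9 : ℂ) * (A.d i : ℂ) ^ 2) • TYb j 0)

/-- The twisted Yangian `ᵢY` in Drinfeld presentation. -/
abbrev TY (A : CartanData I) : Type := RingQuot (TYRel A)

/-- The generator `h_{i,2r+1}` of the twisted Yangian `ᵢY`. -/
def tyH (A : CartanData I) (i : I) (r : ℕ) : TY A :=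
  RingQuot.mkAlgHom ℂ (TYRel A) (TYhodd i r)

/-- The generator `b_{i,r}` of the twisted Yangian `ᵢY`. -/
def tyB (A : CartanData I) (i : I) (r : ℕ) : TY A :=
  RingQuot.mkAlgHom ℂ (TYRel A) (TYb i r)

/-- Defining relations of the algebra `𝔅` (the presentation of `U(g[z]^ω̌)`). -/
inductive BRel (A : CartanData I) : FreeAlgebra ℂ (TYGen I) → FreeAlgebra ℂ (TYGen I) → Prop
  | hh (i j : I) (r s : ℕ) : BRel A ⁅TYhodd i r, TYhodd j s⁆ 0
  | hb (i j : I) (r s : ℕ) :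
      BRel A ⁅TYhodd i r, TYb j s⁆ ((2 * (A.al i j : ℂ)) • TYb j (2 * r + s + 1))
  | bb (i j : I) (r s : ℕ) :
      BRel A (⁅TYb i (r + 1), TYb j s⁆ - ⁅TYb i r, TYb j (s + 1)⁆)
        ((-(if i = j then (-1 : ℂ) ^ r + (-1 : ℂ) ^ s else 0)) • TYhnat i (r + s + 1))
  | serre0 (i j : I) (hc : A.c i j = 0) : BRel A ⁅TYb i 0, TYb j 0⁆ 0
  | serre1 (i j : I) (hc : A.c i j = -1) :
      BRel A ⁅TYb i 0, ⁅TYb i 0, TYb j 0⁆⁆ ((-(A.d i : ℂ)) • TYb j 0)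
  | serre2 (i j : I) (hc : A.c i j = -2) :
      BRel A ⁅TYb i 0, ⁅TYb i 0, ⁅TYb i 0, TYb j 0⁆⁆⁆
        (((-4 : ℂ) * (A.d i : ℂ)) • ⁅TYb i 0, TYb j 0⁆)
  | serre3 (i j : I) (hc : A.c i j = -3) :
      BRel A ⁅TYb i 0, ⁅TYb i 0, ⁅TYb i 0, ⁅TYb i 0, TYb j 0⁆⁆⁆⁆
        (((-10 : ℂ) * (A.d i : ℂ)) • ⁅TYb i 0, ⁅TYb i 0, TYb j 0⁆⁆
          + ((-9 : ℂ) * (A.d i : ℂ) ^ 2) • TYb j 0)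

/-- The algebra `𝔅`. -/
abbrev BAlg (A : CartanData I) : Type := RingQuot (BRel A)

/-- The generator `h_{i,2r+1}` of `𝔅`. -/
def hB (A : CartanData I) (i : I) (r : ℕ) : BAlg A :=
  RingQuot.mkAlgHom ℂ (BRel A) (TYhodd i r)

/-- The generator `b_{i,r}` of `𝔅`. -/
def bB (A : CartanData I) (i : I) (r : ℕ) : BAlg A :=
  RingQuot.mkAlgHom ℂ (BRel A) (TYb i r)

end Algebras

/-- Generators `h_{i,1}`, `b_{i,0}`, `b_{i,1}` for the minimalistic presentations. -/
inductive MinGen (I : Type) : Type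
  | h1 : I → MinGen I
  | b0 : I → MinGen I
  | b1 : I → MinGen I

section MinAlgebras

variable {I : Type} [Fintype I] [DecidableEq I]

/-- The generator `h_{i,1}` of the free algebra. -/
def mh (i : I) : FreeAlgebra ℂ (MinGen I) := FreeAlgebra.ι ℂ (MinGen.h1 i)

/-- The generator `b_{i,0}` of the free algebra. -/
def mb0 (i : I) : FreeAlgebra ℂ (MinGen I) := FreeAlgebra.ι ℂ (MinGen.b0 i)

/-- The generator `b_{i,1}` of the free algebra. -/
def mb1 (i : I) : FreeAlgebra ℂ (MinGen I) := FreeAlgebra.ι ℂ (MinGen.b1 i)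

/-- Defining relations of the minimalistic presentation `ᵢY^min`. -/
inductive MinRel (A : CartanData I) : FreeAlgebra ℂ (MinGen I) → FreeAlgebra ℂ (MinGen I) → Prop
  | hh (i j : I) : MinRel A ⁅mh i, mh j⁆ 0
  | hb (i j : I) : MinRel A ⁅mh i, mb0 j⁆ ((2 * (A.al i j : ℂ)) • mb1 j)
  | bb (i j : I) :
      MinRel A (⁅mb1 i, mb0 j⁆ - ⁅mb0 i, mb1 j⁆)
        (((A.al i j : ℂ) / 2) • (mb0 i * mb0 j + mb0 j * mb0 i)
          - (if i = j then (2 : ℂ) else 0) • mh i)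
  | serre0 (i j : I) (hc : A.c i j = 0) : MinRel A ⁅mb0 i, mb0 j⁆ 0
  | serre1 (i j : I) (hc : A.c i j = -1) :
      MinRel A ⁅mb0 i, ⁅mb0 i, mb0 j⁆⁆ ((-(A.d i : ℂ)) • mb0 j)
  | serre2 (i j : I) (hc : A.c i j = -2) :
      MinRel A ⁅mb0 i, ⁅mb0 i, ⁅mb0 i, mb0 j⁆⁆⁆ (((-4 : ℂ) * (A.d i : ℂ)) • ⁅mb0 i, mb0 j⁆)
  | serre3 (i j : I) (hc : A.c i j = -3) :
      MinRel A ⁅mb0 i, ⁅mb0 i, ⁅mb0 i, ⁅mb0 i, mb0 j⁆⁆⁆⁆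
        (((-10 : ℂ) * (A.d i : ℂ)) • ⁅mb0 i, ⁅mb0 i, mb0 j⁆⁆
          + ((-9 : ℂ) * (A.d i : ℂ) ^ 2) • mb0 j)

/-- The relations of `ᵢY^min` together with the additional relation
`[h_{i₀,1},[b_{i₀,1},[h_{i₀,1},b_{i₀,1}]]] = (α_{i₀},α_{i₀})² [b_{i₀,1}², h_{i₀,1}]`. -/
inductive MinRelP (A : CartanData I) (i₀ : I) :
    FreeAlgebra ℂ (MinGen I) → FreeAlgebra ℂ (MinGen I) → Prop
  | base {x y : FreeAlgebra ℂ (MinGen I)} : MinRel A x y → MinRelP A i₀ x y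
  | extra : MinRelP A i₀ ⁅mh i₀, ⁅mb1 i₀, ⁅mh i₀, mb1 i₀⁆⁆⁆
      (((A.al i₀ i₀ : ℂ) ^ 2) • ⁅mb1 i₀ * mb1 i₀, mh i₀⁆)

/-- Defining relations of the algebra `𝒰`. -/
inductive URel (A : CartanData I) : FreeAlgebra ℂ (MinGen I) → FreeAlgebra ℂ (MinGen I) → Prop
  | hh (i j : I) : URel A ⁅mh i, mh j⁆ 0
  | hb (i j : I) : URel A ⁅mh i, mb0 j⁆ ((2 * (A.al i j : ℂ)) • mb1 j)
  | bb (i j : I) :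
      URel A ⁅mb1 i, mb0 j⁆ (⁅mb0 i, mb1 j⁆ - (if i = j then (2 : ℂ) else 0) • mh i)
  | serre0 (i j : I) (hc : A.c i j = 0) : URel A ⁅mb0 i, mb0 j⁆ 0
  | serre1 (i j : I) (hc : A.c i j = -1) :
      URel A ⁅mb0 i, ⁅mb0 i, mb0 j⁆⁆ ((-(A.d i : ℂ)) • mb0 j)
  | serre2 (i j : I) (hc : A.c i j = -2) :
      URel A ⁅mb0 i, ⁅mb0 i, ⁅mb0 i, mb0 j⁆⁆⁆ (((-4 : ℂ) * (A.d i : ℂ)) • ⁅mb0 i, mb0 j⁆)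
  | serre3 (i j : I) (hc : A.c i j = -3) :
      URel A ⁅mb0 i, ⁅mb0 i, ⁅mb0 i, ⁅mb0 i, mb0 j⁆⁆⁆⁆
        (((-10 : ℂ) * (A.d i : ℂ)) • ⁅mb0 i, ⁅mb0 i, mb0 j⁆⁆
          + ((-9 : ℂ) * (A.d i : ℂ) ^ 2) • mb0 j)

/-- The relations of `𝒰` together with the additional relation
`[h_{i₀,1},[b_{i₀,1},[h_{i₀,1},b_{i₀,1}]]] = 0`. -/
inductive URelP (A : CartanData I) (i₀ : I) :
    FreeAlgebra ℂ (MinGen I) → FreeAlgebra ℂ (MinGen I) → Prop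
  | base {x y : FreeAlgebra ℂ (MinGen I)} : URel A x y → URelP A i₀ x y
  | extra : URelP A i₀ ⁅mh i₀, ⁅mb1 i₀, ⁅mh i₀, mb1 i₀⁆⁆⁆ 0

/-- The algebra `𝒰`. -/
abbrev UAlg (A : CartanData I) : Type := RingQuot (URel A)

/-- The generator `h_{i,1}` of `𝒰`. -/
def uH1 (A : CartanData I) (i : I) : UAlg A := RingQuot.mkAlgHom ℂ (URel A) (mh i)

/-- The generator `b_{i,0}` of `𝒰`. -/
def uB0 (A : CartanData I) (i : I) : UAlg A := RingQuot.mkAlgHom ℂ (URel A) (mb0 i)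

/-- The generator `b_{i,1}` of `𝒰`. -/
def uB1 (A : CartanData I) (i : I) : UAlg A := RingQuot.mkAlgHom ℂ (URel A) (mb1 i)

/-- The elements `b_{i,r}` of `𝒰`, defined recursively by
`b_{i,r+1} := (2(α_i,α_i))⁻¹ [h_{i,1}, b_{i,r}]` for `r ≥ 1`. -/
def uB (A : CartanData I) (i : I) : ℕ → UAlg A
  | 0 => uB0 A i
  | 1 => uB1 A i
  | r + 2 => (2 * (A.al i i : ℂ))⁻¹ • ⁅uH1 A i, uB A i (r + 1)⁆

/-- The elements `h_{i,r}` of `𝒰`: `h_{i,0} := 0`, `h_{i,1}` is the generator, and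
`h_{i,r+1} := [b_{i,0}, b_{i,r+1}]` for `r ≥ 1`. -/
def uH (A : CartanData I) (i : I) : ℕ → UAlg A
  | 0 => 0
  | 1 => uH1 A i
  | r + 2 => ⁅uB0 A i, uB A i (r + 2)⁆

end MinAlgebras

/-!
Since the `h_{k,1}` commute and `b_{l,r+1}` is obtained from `b_{l,r}` by `ad h_{l,1}`, every
`ad h_{k,1}` acts on the family `b_{l,•}` as the shift `b_{l,r} ↦ 2(α_k,α_l) b_{l,r+1}`.
For `i ≠ j`, applying `ad h_{i,1}` and `ad h_{j,1}` to the defect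
`[b_{i,r+1}, b_{j,s}] - [b_{i,r}, b_{j,s+1}]` gives a linear system for the two next defects whose
determinant `4((α_i,α_i)(α_j,α_j) - (α_i,α_j)²)` is positive (as `c_{ij} c_{ji} ≤ 3`), so the
vanishing of the defect at `r = s = 0` propagates to all `r, s`. Applying `ad h_{i,1}` to
`[b_{i,0}, b_{i,1}] = h_{i,1}` gives `[b_{i,0}, b_{i,2}] = 0` and `h_{i,3} = [b_{i,2}, b_{i,1}]`.
Expanding `[[b_{i,2}, b_{i,1}], b_{j,r}]` by the Jacobi identity and moving all shifts onto `b_j`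
leaves `[h_{i,1}, b_{j,r+2}] = 2(α_i,α_j) b_{j,r+3}`.
-/

namespace CartanData

variable {I : Type} [Fintype I] (A : CartanData I)

lemma al_comm (i j : I) : A.al i j = A.al j i := A.d_symm i j

lemma al_self (i : I) : A.al i i = 2 * A.d i := by
  simp [al, A.c_diag i, mul_comm]

lemma two_mul_al_self_ne_zero (i : I) : (2 * (A.al i i : ℂ)) ≠ 0 := by
  have h : 0 < 2 * A.al i i := by linarith [A.al_self i, A.d_pos i]
  exact_mod_cast h.ne'

lemma al_mul_al_lt (i j : I) (h : i ≠ j) : A.al i j * A.al i j < A.al i i * A.al j j := by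
  have hd := mul_pos (A.d_pos i) (A.d_pos j)
  have hc : (A.c i j : ℝ) * A.c j i ≤ 3 := by exact_mod_cast A.c_bound i j h
  have hsq : A.al i j * A.al i j = A.d i * A.d j * ((A.c i j : ℝ) * A.c j i) := by
    unfold al
    nth_rewrite 2 [A.d_symm i j]
    ring
  rw [hsq, al_self, al_self]
  nlinarith

end CartanData

theorem eq_zero_of_smul_add_smul_eq_zero {K M : Type*} [Field K] [AddCommGroup M] [Module K M]
    {a b c d : K} {x y : M} (h₁ : a • x + b • y = 0) (h₂ : c • x + d • y = 0)
    (hdet : a * d - b * c ≠ 0) : x = 0 ∧ y = 0 := by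
  have hx : (a * d - b * c) • x = d • (a • x + b • y) - b • (c • x + d • y) := by module
  have hy : (a * d - b * c) • y = a • (c • x + d • y) - c • (a • x + b • y) := by module
  rw [h₁, h₂, smul_zero, smul_zero, sub_zero] at hx hy
  exact ⟨(smul_eq_zero.mp hx).resolve_left hdet, (smul_eq_zero.mp hy).resolve_left hdet⟩

lemma map_ring_bracket {F R S : Type*} [Ring R] [Ring S] [FunLike F R S] [RingHomClass F R S]
    (f : F) (x y : R) : f ⁅x, y⁆ = ⁅f x, f y⁆ := by
  simp only [Ring.lie_def, map_sub, map_mul]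

section UAlg

variable {I : Type} [Fintype I] [DecidableEq I] (A : CartanData I)

attribute [local instance 100] LieRing.ofAssociativeRing

/-- `lie_smul` and `smul_lie` restated: the scalar action of `RingQuot` is not reducibly the one
they are stated for, so `rw` cannot use them on `𝒰` directly. -/
lemma lie_smul_uAlg (c : ℂ) (x y : UAlg A) : ⁅x, c • y⁆ = c • ⁅x, y⁆ := lie_smul c x y

lemma smul_lie_uAlg (c : ℂ) (x y : UAlg A) : ⁅c • x, y⁆ = c • ⁅x, y⁆ := smul_lie c x y

lemma uH1_lie_uH1 (i j : I) : ⁅uH1 A i, uH1 A j⁆ = 0 := by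
  simpa [map_ring_bracket, uH1] using RingQuot.mkAlgHom_rel ℂ (URel.hh (A := A) i j)

lemma uH1_lie_uB_zero (i j : I) : ⁅uH1 A i, uB A j 0⁆ = (2 * (A.al i j : ℂ)) • uB A j 1 := by
  simpa [map_ring_bracket, uH1, uB, uB0, uB1] using
    RingQuot.mkAlgHom_rel ℂ (URel.hb (A := A) i j)

lemma uB_one_lie_uB_zero_of_ne {i j : I} (hij : i ≠ j) :
    ⁅uB A i 1, uB A j 0⁆ = ⁅uB A i 0, uB A j 1⁆ := by
  simpa [map_ring_bracket, uB, uB0, uB1, hij] using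
    RingQuot.mkAlgHom_rel ℂ (URel.bb (A := A) i j)

lemma uB_zero_lie_uB_one (i : I) : ⁅uB A i 0, uB A i 1⁆ = uH1 A i := by
  have h : ⁅uB A i 1, uB A i 0⁆ = ⁅uB A i 0, uB A i 1⁆ - (2 : ℂ) • uH1 A i := by
    simpa [map_ring_bracket, uH1, uB, uB0, uB1] using
      RingQuot.mkAlgHom_rel ℂ (URel.bb (A := A) i i)
  rw [← lie_skew] at h
  refine smul_right_injective (UAlg A) (two_ne_zero (α := ℂ)) ?_
  linear_combination (norm := module) -h

lemma uH1_lie_uB_self (i : I) (r : ℕ) :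
    ⁅uH1 A i, uB A i r⁆ = (2 * (A.al i i : ℂ)) • uB A i (r + 1) := by
  cases r with
  | zero => exact uH1_lie_uB_zero A i i
  | succ r => exact (smul_inv_smul₀ (A.two_mul_al_self_ne_zero i) _).symm

lemma uH1_lie_uB (k l : I) (r : ℕ) :
    ⁅uH1 A k, uB A l r⁆ = (2 * (A.al k l : ℂ)) • uB A l (r + 1) := by
  induction r with
  | zero => exact uH1_lie_uB_zero A k l
  | succ r ih =>
    refine smul_right_injective (UAlg A) (A.two_mul_al_self_ne_zero l) ?_
    calc (2 * (A.al l l : ℂ)) • ⁅uH1 A k, uB A l (r + 1)⁆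
        = ⁅uH1 A k, ⁅uH1 A l, uB A l r⁆⁆ := by rw [uH1_lie_uB_self, lie_smul_uAlg]
      _ = ⁅uH1 A l, ⁅uH1 A k, uB A l r⁆⁆ := by rw [leibniz_lie, uH1_lie_uH1, zero_lie, zero_add]
      _ = (2 * (A.al l l : ℂ)) • (2 * (A.al k l : ℂ)) • uB A l (r + 2) := by
        rw [ih, lie_smul_uAlg, uH1_lie_uB_self, smul_comm]

lemma uH1_lie_lie_uB (k l m : I) (p q : ℕ) :
    ⁅uH1 A k, ⁅uB A l p, uB A m q⁆⁆
      = (2 * (A.al k l : ℂ)) • ⁅uB A l (p + 1), uB A m q⁆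
        + (2 * (A.al k m : ℂ)) • ⁅uB A l p, uB A m (q + 1)⁆ := by
  rw [leibniz_lie, uH1_lie_uB, uH1_lie_uB, smul_lie_uAlg, lie_smul_uAlg]

lemma uB_zero_lie_uB_two (i : I) : ⁅uB A i 0, uB A i 2⁆ = 0 := by
  have h := uH1_lie_lie_uB A i i i 0 1
  rw [uB_zero_lie_uB_one, lie_self, lie_self, smul_zero, zero_add, eq_comm, smul_eq_zero] at h
  exact h.resolve_left (A.two_mul_al_self_ne_zero i)

lemma uH_three (i : I) : uH A i 3 = ⁅uB A i 2, uB A i 1⁆ := by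
  have h := uH1_lie_lie_uB A i i i 0 2
  rw [uB_zero_lie_uB_two, lie_zero, ← smul_add, eq_comm, smul_eq_zero] at h
  rw [← lie_skew]
  refine eq_neg_of_add_eq_zero_right (h.resolve_left ?_)
  exact A.two_mul_al_self_ne_zero i

def uShiftDefect (i j : I) (r s : ℕ) : UAlg A :=
  ⁅uB A i (r + 1), uB A j s⁆ - ⁅uB A i r, uB A j (s + 1)⁆

lemma uH1_lie_uShiftDefect (k i j : I) (r s : ℕ) :
    ⁅uH1 A k, uShiftDefect A i j r s⁆
      = (2 * (A.al k i : ℂ)) • uShiftDefect A i j (r + 1) s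
        + (2 * (A.al k j : ℂ)) • uShiftDefect A i j r (s + 1) := by
  simp only [uShiftDefect, lie_sub, uH1_lie_lie_uB]
  module

lemma uShiftDefect_succ_eq_zero {i j : I} (hij : i ≠ j) {r s : ℕ}
    (h : uShiftDefect A i j r s = 0) :
    uShiftDefect A i j (r + 1) s = 0 ∧ uShiftDefect A i j r (s + 1) = 0 := by
  have hi := uH1_lie_uShiftDefect A i i j r s
  have hj := uH1_lie_uShiftDefect A j i j r s
  rw [h, lie_zero] at hi hj
  refine eq_zero_of_smul_add_smul_eq_zero hi.symm hj.symm ?_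
  have hdet : 0 < 2 * A.al i i * (2 * A.al j j) - 2 * A.al i j * (2 * A.al i j) := by
    linarith [A.al_mul_al_lt i j hij]
  rw [← A.al_comm i j]
  exact_mod_cast hdet.ne'

lemma uShiftDefect_eq_zero {i j : I} (hij : i ≠ j) (r s : ℕ) : uShiftDefect A i j r s = 0 := by
  induction r generalizing s with
  | zero =>
    induction s with
    | zero => exact sub_eq_zero.mpr (uB_one_lie_uB_zero_of_ne A hij)
    | succ s ih => exact (uShiftDefect_succ_eq_zero A hij ih).2
  | succ r ih => exact (uShiftDefect_succ_eq_zero A hij (ih s)).1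

lemma uB_succ_lie_uB_of_ne {i j : I} (hij : i ≠ j) (r s : ℕ) :
    ⁅uB A i (r + 1), uB A j s⁆ = ⁅uB A i r, uB A j (s + 1)⁆ :=
  sub_eq_zero.mp (uShiftDefect_eq_zero A hij r s)

end UAlg

theorem U_h3_b_bracket_general
    {I : Type} [Fintype I] [DecidableEq I] (A : CartanData I)
    (i j : I) (hne : i ≠ j) (r : ℕ) :
    ⁅uH A i 3, uB A j r⁆ = (2 * (A.al i j : ℂ)) • uB A j (r + 3) := by
  let _ : LieRing (UAlg A) := LieRing.ofAssociativeRing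
  have shift := uB_succ_lie_uB_of_ne A hne
  calc ⁅uH A i 3, uB A j r⁆
      = ⁅uB A i 2, ⁅uB A i 1, uB A j r⁆⁆ - ⁅uB A i 1, ⁅uB A i 2, uB A j r⁆⁆ := by
        rw [uH_three, lie_lie]
    _ = ⁅uB A i 2, ⁅uB A i 0, uB A j (r + 1)⁆⁆ - ⁅uB A i 1, ⁅uB A i 0, uB A j (r + 2)⁆⁆ := by
        rw [shift 0 r, shift 1 r, shift 0 (r + 1)]
    _ = ⁅uB A i 0, ⁅uB A i 2, uB A j (r + 1)⁆⁆
          - (⁅uB A i 0, ⁅uB A i 1, uB A j (r + 2)⁆⁆ - ⁅uH1 A i, uB A j (r + 2)⁆) := by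
        rw [leibniz_lie (uB A i 2), leibniz_lie (uB A i 1), ← lie_skew (uB A i 2) (uB A i 0),
          ← lie_skew (uB A i 1) (uB A i 0), uB_zero_lie_uB_two, uB_zero_lie_uB_one, neg_zero,
          zero_lie, neg_lie]
        abel
    _ = ⁅uH1 A i, uB A j (r + 2)⁆ := by
        rw [shift 1 (r + 1)]
        abel
    _ = (2 * (A.al i j : ℂ)) • uB A j (r + 3) := uH1_lie_uB A i j (r + 2)

/-- in `𝒰`, for `i ≠ j`, `[h_{i,3}, b_{j,r}] = 2(α_i,α_j) b_{j,r+3}`. -/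
theorem U_h3_b_bracket
    {I : Type} [Fintype I] [DecidableEq I] [Nonempty I] (A : CartanData I)
    (i j : I) (hne : i ≠ j) (r : ℕ) :
    ⁅uH A i 3, uB A j r⁆ = (2 * (A.al i j : ℂ)) • uB A j (r + 3) :=
  U_h3_b_bracket_general A i j hne r
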